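/- For b ≥ 0, w > 0, c > 0, f̂, μ ∈ ℝ, σ > 0, the function y ↦ y · ψ(y), where ψ(y) = b + (w/c^4)(3σ^4 + (y + f̂ − μ)^4 + 6(y + f̂ − μ)^2 σ^2), is convex on the set {y : y ≥ 0 and y + f̂ − μ ≥ 0}. -/

import Mathlib

/-- The function `y ↦ y · ψ(y)`, where
`ψ(y) = b + (w/c⁴)(3σ⁴ + (y + f̂ − μ)⁴ + 6(y + f̂ − μ)² σ²)`,
is convex on `{y : y ≥ 0 ∧ y + f̂ − μ ≥ 0}`. -/
theorem expected_total_cost_convexOn (b w c fhat μ σ : ℝ) (hb : 0 ≤ b) (hw : 0 < w)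
    (hc : 0 < c) (hσ : 0 < σ) :
    ConvexOn ℝ {y : ℝ | 0 ≤ y ∧ 0 ≤ y + fhat - μ}
      (fun y => y * (b + (w / c ^ 4) *
        (3 * σ ^ 4 + (y + fhat - μ) ^ 4 + 6 * (y + fhat - μ) ^ 2 * σ ^ 2))) := by
  set k : ℝ := w / c ^ 4 with hk
  have hk0 : 0 < k := div_pos hw (by positivity)
  have hD : Convex ℝ {y : ℝ | 0 ≤ y ∧ 0 ≤ y + fhat - μ} := by
    have : {y : ℝ | 0 ≤ y ∧ 0 ≤ y + fhat - μ} = Set.Ici (max 0 (μ - fhat)) := by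
      ext x
      simp only [Set.mem_setOf_eq, Set.mem_Ici, max_le_iff]
      constructor <;> intro h
      · exact ⟨h.1, by linarith [h.2]⟩
      · exact ⟨h.1, by linarith [h.2]⟩
    rw [this]; exact convex_Ici _
  set f' : ℝ → ℝ := fun y =>
    (b + k * (3 * σ ^ 4 + (y + fhat - μ) ^ 4 + 6 * (y + fhat - μ) ^ 2 * σ ^ 2))
      + y * (k * (4 * (y + fhat - μ) ^ 3 + 12 * (y + fhat - μ) * σ ^ 2)) with hf'def
  set f'' : ℝ → ℝ := fun y =>
    k * (8 * (y + fhat - μ) ^ 3 + 24 * (y + fhat - μ) * σ ^ 2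
      + 12 * y * (y + fhat - μ) ^ 2 + 12 * y * σ ^ 2) with hf''def
  have h1 : ∀ y : ℝ, HasDerivAt (fun y : ℝ => y + fhat - μ) 1 y := fun y => by
    simpa using ((hasDerivAt_id y).add_const fhat).sub_const μ
  have hA : ∀ y : ℝ, HasDerivAt (fun y : ℝ => b + k *
      (3 * σ ^ 4 + (y + fhat - μ) ^ 4 + 6 * (y + fhat - μ) ^ 2 * σ ^ 2))
      (k * (4 * (y + fhat - μ) ^ 3 + 12 * (y + fhat - μ) * σ ^ 2)) y := by
    intro y
    have h4 : HasDerivAt (fun y : ℝ => (y + fhat - μ) ^ 4) (4 * (y + fhat - μ) ^ 3) y := by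
      simpa using (h1 y).fun_pow 4
    have h2 : HasDerivAt (fun y : ℝ => (y + fhat - μ) ^ 2) (2 * (y + fhat - μ)) y := by
      simpa using (h1 y).fun_pow 2
    have := ((((h4.const_add (3 * σ ^ 4)).add
      (((h2.const_mul 6)).mul_const (σ ^ 2)))).const_mul k).const_add b
    convert this using 1
    · rfl
    · rfl
    · rfl
    ring
  have hd1 : ∀ y : ℝ, HasDerivAt
      (fun y => y * (b + k *
        (3 * σ ^ 4 + (y + fhat - μ) ^ 4 + 6 * (y + fhat - μ) ^ 2 * σ ^ 2))) (f' y) y := by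
    intro y
    have := (hasDerivAt_id y).mul (hA y)
    convert this using 1
    · rfl
    · rfl
    · rfl
    simp only [hf'def, id_eq]
    ring
  have hd2 : ∀ y : ℝ, HasDerivAt f' (f'' y) y := by
    intro y
    have h3 : HasDerivAt (fun y : ℝ => (y + fhat - μ) ^ 3) (3 * (y + fhat - μ) ^ 2) y := by
      simpa using (h1 y).fun_pow 3
    have hBin : HasDerivAt
        (fun y : ℝ => k * (4 * (y + fhat - μ) ^ 3 + 12 * (y + fhat - μ) * σ ^ 2))
        (k * (4 * (3 * (y + fhat - μ) ^ 2) + 12 * 1 * σ ^ 2)) y :=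
      ((h3.const_mul 4).add (((h1 y).const_mul 12).mul_const (σ ^ 2))).const_mul k
    have hB := (hasDerivAt_id y).mul hBin
    have := (hA y).add hB
    convert this using 1
    · rfl
    · rfl
    · rfl
    simp only [hf''def, id_eq]
    ring
  refine convexOn_of_hasDerivWithinAt2_nonneg hD ?_ (f' := f') (f'' := f'') ?_ ?_ ?_
  · exact Continuous.continuousOn (by continuity)
  · exact fun x _ => (hd1 x).hasDerivWithinAt
  · exact fun x _ => (hd2 x).hasDerivWithinAt
  · intro x hx
    obtain ⟨hx0, hxa⟩ := interior_subset hx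
    have : 0 ≤ 8 * (x + fhat - μ) ^ 3 + 24 * (x + fhat - μ) * σ ^ 2
        + 12 * x * (x + fhat - μ) ^ 2 + 12 * x * σ ^ 2 := by positivity
    exact mul_nonneg hk0.le this
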